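/- arXiv:1911.04259 — 3 statements merged into one kernel-verified Lean document; each statement's English description precedes it below -/
import Mathlib

section
/- In a Wm-group G, r * r⁻¹ = [r] for every r in G. -/
/-- A Wm-group: a set with a binary operation `mul`, a right identity `bra r` (written `[r]`),
a left inverse `inv r` (written `r⁻¹`), and for each `m, r` a unique solution `ldiv m r`
(written `m⁻¹ * r`) of the equation `m * z = r`. -/
class WmGroup (G : Type*) where
  mul : G → G → G
  bra : G → G
  inv : G → G
  ldiv : G → G → G
  semi : ∀ r m n : G, mul r (mul m n) = mul m (mul r n)
  mul_bra : ∀ r : G, mul r (bra r) = r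
  inv_mul : ∀ r : G, mul (inv r) r = bra r
  inv_mul_bra : ∀ r : G, mul (inv r) (bra r) = inv r
  mul_ldiv : ∀ m r : G, mul m (ldiv m r) = r
  ldiv_unique : ∀ m r z : G, mul m z = r → z = ldiv m r

open WmGroup

theorem wm_mul_inv {G : Type*} [WmGroup G] (r : G) : mul r (inv r) = bra r := by
  -- `bra (inv r) = bra r`, since both solve `inv r * z = inv r`
  have hbra : bra (inv r) = bra r := by
    have h1 : bra (inv r) = ldiv (inv r) (inv r) :=
      ldiv_unique _ _ _ (mul_bra (inv r))
    have h2 : bra r = ldiv (inv r) (inv r) :=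
      ldiv_unique _ _ _ (inv_mul_bra r)
    rw [h1, h2]
  set s := inv (inv r) with hs
  -- `s * bra r = s`
  have hsbra : mul s (bra r) = s := by
    rw [← hbra]; exact inv_mul_bra (inv r)
  -- `inv r * s = bra r`
  have key : mul (inv r) s = bra r := by
    have := semi (inv r) s (bra r)
    rw [hsbra, inv_mul_bra r] at this
    rw [this, ← hbra]
    exact inv_mul (inv r)
  -- hence `s = r` by uniqueness of solutions to `inv r * z = bra r`
  have hsr : s = r := by
    have h1 : s = ldiv (inv r) (bra r) := ldiv_unique _ _ _ key
    have h2 : r = ldiv (inv r) (bra r) := ldiv_unique _ _ _ (inv_mul r)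
    exact h1.trans h2.symm
  calc mul r (inv r) = mul s (inv r) := by rw [hsr]
    _ = bra (inv r) := inv_mul (inv r)
    _ = bra r := hbra
end

section
/- In a Wm-group G, [m⁻¹] = [m] for every m in G. -/
open WmGroup

theorem wm_bra_inv {G : Type*} [WmGroup G] (m : G) : bra (inv m) = bra m := by
  have h1 : bra (inv m) = ldiv (inv m) (inv m) :=
    ldiv_unique _ _ _ (mul_bra (inv m))
  have h2 : bra m = ldiv (inv m) (inv m) :=
    ldiv_unique _ _ _ (inv_mul_bra m)
  rw [h1, h2]
end

section
/- In a Wm-group G, two elements r and m commute (r * m = m * r) if and only if [r] = [m]. -/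
open WmGroup

theorem wm_comm_iff {G : Type*} [WmGroup G] (r m : G) :
    mul r m = mul m r ↔ bra r = bra m := by
  have cancel : ∀ a b c : G, mul a b = mul a c → b = c := fun a b c h => by
    rw [ldiv_unique a (mul a b) b rfl, ldiv_unique a (mul a c) c rfl, h]
  have key : mul r m = mul m (mul r (bra m)) := by
    conv_lhs => rw [← mul_bra m]
    exact semi r m (bra m)
  constructor
  · intro h
    have h1 : mul m (mul r (bra m)) = mul m r := by rw [← key, h]
    have h2 : mul r (bra m) = r := cancel m _ _ h1
    rw [ldiv_unique r r (bra r) (mul_bra r), ldiv_unique r r (bra m) h2]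
  · intro h
    rw [key, ← h, mul_bra]
end
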